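/- arXiv:2008.02245 — 7 statements merged into one kernel-verified Lean document; each statement's English description precedes it below -/
import Mathlib

section
/- Let 𝒞 be a class of S-acts closed under arbitrary direct products. Suppose there exists an infinite cardinal ℵ such that for every C ∈ 𝒞 and every subact T of C with |T| ≤ |A| there exists a subact B of C with T ⊆ B, B ∈ 𝒞, and |B| ≤ ℵ. Then the S-act A has a 𝒞-preenvelope. -/
universe u

open Cardinal

/-- A (finite-system component) equation over an `S`-act `B` in `n` unknowns:
`xᵢ r = xᵢ s`, `xᵢ r = xⱼ s`, or `xᵢ r = a` with `a ∈ B`. -/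
inductive ActEq (S : Type u) (B : Type u) (n : ℕ) where
  | xrxs (i : Fin n) (r s : S)
  | xrys (i j : Fin n) (r s : S)
  | xra (i : Fin n) (r : S) (a : B)

/-- An assignment `v` of the unknowns satisfies an equation. -/
def SatEq {S B : Type u} [Monoid S] [MulAction S B] {n : ℕ} (v : Fin n → B) :
    ActEq S B n → Prop
  | .xrxs i r s => r • v i = s • v i
  | .xrys i j r s => r • v i = s • v j
  | .xra i r a => r • v i = a

/-- The constants of the equation lie in the subset `U`. -/
def ConstIn {S B : Type u} (U : Set B) {n : ℕ} : ActEq S B n → Prop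
  | .xra _ _ a => a ∈ U
  | _ => True

/-- `U` is a pure subset of the `S`-act `B`: every finite system of equations with
constants from `U` that is solvable in `B` is solvable in `U`. -/
def IsPure (S : Type u) {B : Type u} [Monoid S] [MulAction S B] (U : Set B) : Prop :=
  ∀ (n : ℕ) (E : List (ActEq S B n)), (∀ e ∈ E, ConstIn U e) →
    (∃ v : Fin n → B, ∀ e ∈ E, SatEq v e) →
    ∃ v : Fin n → B, (∀ i, v i ∈ U) ∧ ∀ e ∈ E, SatEq v e

/-- `φ : A → C` is a `𝒞`-preenvelope of `A`. -/
def IsPreenvelope {S : Type u} [Monoid S] (𝒞 : (C : Type u) → [MulAction S C] → Prop)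
    (A : Type u) [MulAction S A] (C : Type u) [MulAction S C] (φ : A →[S] C) : Prop :=
  𝒞 C ∧ ∀ (C' : Type u) [MulAction S C'], 𝒞 C' →
    ∀ f : A →[S] C', ∃ g : C →[S] C', ∀ a, g (φ a) = f a

/-- `A` has a `𝒞`-preenvelope. -/
def HasPreenvelope {S : Type u} [Monoid S] (𝒞 : (C : Type u) → [MulAction S C] → Prop)
    (A : Type u) [MulAction S A] : Prop :=
  ∃ (C : Type u) (inst : MulAction S C), letI := inst
    ∃ φ : A →[S] C, IsPreenvelope 𝒞 A C φ

/-- An injective `S`-act: maps into it extend along all embeddings of acts. -/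
def IsInjectiveAct (S : Type u) [Monoid S] (E : Type u) [MulAction S E] : Prop :=
  ∀ (A B : Type u) [MulAction S A] [MulAction S B] (i : A →[S] B),
    Function.Injective i → ∀ f : A →[S] E, ∃ g : B →[S] E, ∀ a, g (i a) = f a

/-- `A` is absolutely pure: it is pure in every act containing it. -/
def IsAbsolutelyPure (S : Type u) [Monoid S] (A : Type u) [MulAction S A] : Prop :=
  ∀ (B : Type u) [MulAction S B] (i : A →[S] B), Function.Injective i →
    IsPure S (Set.range i)

/-- The right ideal of `S` generated by a set `F` (in the act convention `s • t = s * t`). -/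
def genIdeal {S : Type u} [Monoid S] (F : Set S) : Set S :=
  {x | ∃ s : S, ∃ f ∈ F, x = s * f}

theorem genIdeal_smul {S : Type u} [Monoid S] (F : Set S) (s : S) {x : S}
    (hx : x ∈ genIdeal F) : s * x ∈ genIdeal F := by
  obtain ⟨t, f, hf, rfl⟩ := hx; exact ⟨s * t, f, hf, (mul_assoc s t f).symm⟩

/-- A map `h` defined on an ideal `I ⊆ S` extends to an act map `S → A`. -/
def ExtendsHom {S : Type u} [Monoid S] {A : Type u} [MulAction S A] (I : Set S)
    (h : I → A) : Prop :=
  ∃ g : S → A, (∀ s t : S, g (s * t) = s • g t) ∧ ∀ x : I, g x = h x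

/-- `A` is weakly f-injective: homs from finitely generated right ideals extend to `S`. -/
def IsWeaklyFInjective (S : Type u) [Monoid S] (A : Type u) [MulAction S A] : Prop :=
  ∀ (F : Finset S) (h : genIdeal (F : Set S) → A),
    (∀ (s : S) (x : genIdeal (F : Set S)),
      h ⟨s * ↑x, genIdeal_smul _ s x.2⟩ = s • h x) →
    ExtendsHom (genIdeal (F : Set S)) h

/-- `A` is weakly p-injective: homs from principal right ideals extend to `S`. -/
def IsWeaklyPInjective (S : Type u) [Monoid S] (A : Type u) [MulAction S A] : Prop :=
  ∀ (t : S) (h : genIdeal {t} → A),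
    (∀ (s : S) (x : genIdeal {t}),
      h ⟨s * ↑x, genIdeal_smul _ s x.2⟩ = s • h x) →
    ExtendsHom (genIdeal {t}) h

/-!
Every map from `A` into a member of `𝒞` factors through a member of `𝒞` of cardinality at most
`κ`, namely a subact containing its image. Up to isomorphism under `A`, such members are encoded
by act structures on subsets of a fixed set of cardinality `κ`, so there is only a set of them.
The product of one representative of each code lies in `𝒞`, and the induced map from `A` into it
is a preenvelope: a map into `C` factors through one factor of the product.
-/

open Function

namespace MulActionHom

variable {M X Y Z : Type*} [SMul M X] [SMul M Y] [SMul M Z]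

def pi {ι : Type*} {Y : ι → Type*} [∀ i, SMul M (Y i)] (f : ∀ i, X →[M] Y i) :
    X →[M] ∀ i, Y i where
  toFun x i := f i x
  map_smul' m x := funext fun i => map_smul (f i) m x

def range (f : X →[M] Y) : SubMulAction M Y where
  carrier := Set.range f
  smul_mem' m := by
    rintro _ ⟨x, rfl⟩
    exact ⟨m • x, map_smul f m x⟩

def codRestrict (f : X →[M] Y) (p : SubMulAction M Y) (h : ∀ x, f x ∈ p) : X →[M] p where
  toFun x := ⟨f x, h x⟩
  map_smul' m x := Subtype.ext (map_smul f m x)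

theorem exists_comp_eq_of_bijective {e : X →[M] Y} (he : Bijective e) (f : X →[M] Z) :
    ∃ h : Y →[M] Z, ∀ x, h (e x) = f x :=
  let e' := Equiv.ofBijective e he
  ⟨f.comp (e.inverse e'.symm e'.left_inv e'.right_inv), fun x => congrArg f (e'.left_inv x)⟩

end MulActionHom

theorem isPreenvelope_pi {S : Type u} [Monoid S] {𝒞 : (C : Type u) → [MulAction S C] → Prop}
    {A : Type u} [MulAction S A] {ι : Type u} {D : ι → Type u}
    [∀ i, MulAction S (D i)] (ψ : ∀ i, A →[S] D i) (hD : 𝒞 (∀ i, D i))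
    (hfactor : ∀ (C : Type u) [MulAction S C], 𝒞 C → ∀ f : A →[S] C,
      ∃ i, ∃ g : D i →[S] C, ∀ a, g (ψ i a) = f a) :
    IsPreenvelope 𝒞 A (∀ i, D i) (MulActionHom.pi ψ) := by
  refine ⟨hD, fun C _ hC f => ?_⟩
  obtain ⟨i, g, hg⟩ := hfactor C hC f
  exact ⟨g.comp (Pi.evalMulActionHom i), hg⟩

/-- Codes of acts under `A` form a set: this is what makes the family of small members of `𝒞`
set-indexed. -/
structure ActCode (S A K : Type u) [SMul S A] where
  carrier : Set K
  [smul : SMul S carrier]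
  map : A →[S] carrier

attribute [instance] ActCode.smul

namespace ActCode

variable {S A K : Type u} [SMul S A]

def IsRealizable [Monoid S] (𝒞 : (C : Type u) → [MulAction S C] → Prop) (c : ActCode S A K) :
    Prop :=
  ∃ (D : Type u) (_ : MulAction S D) (e : c.carrier →[S] D), Bijective e ∧ 𝒞 D

theorem exists_code {B : Type u} [SMul S B] (g : A →[S] B) (hB : #B ≤ #K) :
    ∃ c : ActCode S A K, ∃ f : c.carrier →[S] B, Bijective f ∧ ∀ a, f (c.map a) = g a := by
  obtain ⟨j⟩ := hB
  let e := Equiv.ofInjective j j.injective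
  let _ : SMul S (Set.range j) := e.symm.smul S
  let toRange : B →[S] Set.range j := ⟨e, fun s b => by simp [Equiv.smul_def]⟩
  let ofRange : Set.range j →[S] B := ⟨e.symm, fun s x => by simp [Equiv.smul_def]⟩
  exact ⟨⟨Set.range j, toRange.comp g⟩, ofRange, e.symm.bijective,
    fun a => e.symm_apply_apply (g a)⟩

end ActCode

theorem exists_solutionSet {S : Type u} [Monoid S] (𝒞 : (C : Type u) → [MulAction S C] → Prop)
    (A : Type u) [SMul S A] (κ : Cardinal.{u}) :
    ∃ (ι : Type u) (D : ι → Type u) (_ : ∀ i, MulAction S (D i)) (ψ : ∀ i, A →[S] D i),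
      (∀ i, 𝒞 (D i)) ∧ ∀ (B : Type u) [MulAction S B], 𝒞 B → #B ≤ κ →
        ∀ g : A →[S] B, ∃ i, ∃ h : D i →[S] B, ∀ a, h (ψ i a) = g a := by
  -- `𝒞` need not be closed under isomorphism, so each code is realized by a chosen member of `𝒞`.
  choose D inst e he hD using fun c : {c : ActCode S A κ.out // c.IsRealizable 𝒞} => c.2
  refine ⟨_, D, inst, fun c => (e c).comp c.1.map, hD, fun B _ hB hBκ g => ?_⟩
  obtain ⟨c, f, hf, hfg⟩ := ActCode.exists_code g (hBκ.trans_eq (mk_out κ).symm)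
  let i : {c : ActCode S A κ.out // c.IsRealizable 𝒞} := ⟨c, B, _, f, hf, hB⟩
  obtain ⟨h, hh⟩ := MulActionHom.exists_comp_eq_of_bijective (he i) f
  exact ⟨i, h, fun a => (hh _).trans (hfg a)⟩

/-- sufficient set-theoretic condition for existence of a `𝒞`-preenvelope. -/
theorem hasPreenvelope_of_bound {S : Type u} [Monoid S]
    (𝒞 : (C : Type u) → [MulAction S C] → Prop)
    (hprod : ∀ (ι : Type u) (C : ι → Type u) [∀ i, MulAction S (C i)],
      (∀ i, 𝒞 (C i)) → 𝒞 ((i : ι) → C i))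
    (A : Type u) [MulAction S A]
    (hcard : ∃ κ : Cardinal.{u}, ℵ₀ ≤ κ ∧
      ∀ (C : Type u) [MulAction S C], 𝒞 C → ∀ T : SubMulAction S C, #T ≤ #A →
        ∃ B : SubMulAction S C, T ≤ B ∧ 𝒞 B ∧ #B ≤ κ) :
    HasPreenvelope 𝒞 A := by
  obtain ⟨κ, -, hbound⟩ := hcard
  obtain ⟨ι, D, _, ψ, hD, hsol⟩ := exists_solutionSet 𝒞 A κ
  refine ⟨_, _, MulActionHom.pi ψ, isPreenvelope_pi ψ (hprod ι D hD) fun C _ hC f => ?_⟩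
  obtain ⟨B, hfB, hB, hBκ⟩ := hbound C hC f.range mk_range_le
  obtain ⟨i, h, hh⟩ := hsol B hB hBκ (f.codRestrict B fun a => hfB ⟨a, rfl⟩)
  exact ⟨i, B.subtype.comp h, fun a => congrArg Subtype.val (hh a)⟩
end

section
/- Let S be a monoid and T a subact of an S-act A. Then there exists a pure subact U of A with T ⊆ U and |U| ≤ max{ℵ₀, |S|, |T|}. -/
universe u

open Cardinal

/-!
Adjoin to `X` one chosen solution of every solvable finite system of equations with constants
in `X`. There are at most `κ = max ℵ₀ |S| |X|` such systems, so this adds at most `κ` elements.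
Iterating `ω` times from `T` gives a pure set of size at most `κ`: the finitely many constants
of a system appear at some finite stage, and its solution at the next one. A pure set is closed
under the action, since `s • a` is the value of `x` in the only solution of `y = a, x = s y`.
-/

open Filter

theorem Cardinal.mk_iUnion_le_of_le {α : Type u} {ι : Type v} {κ : Cardinal.{u}}
    (hκ : ℵ₀ ≤ κ) (hι : lift.{u} #ι ≤ lift.{v} κ) {f : ι → Set α} (hf : ∀ i, #(f i) ≤ κ) :
    #(⋃ i, f i) ≤ κ := by
  rw [← lift_le.{v}]
  refine (mk_iUnion_le_lift f).trans ((mul_le_mul' hι (ciSup_le' fun i => ?_)).trans_eq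
    (mul_eq_self (aleph0_le_lift.2 hκ)))
  exact lift_le.2 (hf i)

namespace ActEq

variable {S B C : Type u} {n : ℕ}

def map (f : B → C) : ActEq S B n → ActEq S C n
  | xrxs i r s => xrxs i r s
  | xrys i j r s => xrys i j r s
  | xra i r a => xra i r (f a)

instance canLift (X : Set B) :
    CanLift (ActEq S B n) (ActEq S X n) (map (↑)) (ConstIn X) where
  prf e he := by
    cases e with
    | xrxs i r s => exact ⟨xrxs i r s, rfl⟩
    | xrys i j r s => exact ⟨xrys i j r s, rfl⟩
    | xra i r a => exact ⟨xra i r ⟨a, he⟩, rfl⟩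

theorem mk_le_of_le {κ : Cardinal.{u}} (hκ : ℵ₀ ≤ κ) (hS : #S ≤ κ) (hB : #B ≤ κ) :
    #(ActEq S B n) ≤ κ := by
  let f : (Fin n × S × S) ⊕ (Fin n × Fin n × S × S) ⊕ (Fin n × S × B) → ActEq S B n
    | .inl (i, r, s) => xrxs i r s
    | .inr (.inl (i, j, r, s)) => xrys i j r s
    | .inr (.inr (i, r, a)) => xra i r a
  have hf : f.Surjective := by
    intro e
    cases e with
    | xrxs i r s => exact ⟨.inl (i, r, s), rfl⟩
    | xrys i j r s => exact ⟨.inr (.inl (i, j, r, s)), rfl⟩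
    | xra i r a => exact ⟨.inr (.inr (i, r, a)), rfl⟩
  have hn : lift.{u} #(Fin n) ≤ κ := by simpa using (natCast_lt_aleph0 (n := n)).le.trans hκ
  refine (mk_le_of_surjective hf).trans ?_
  simp only [mk_sum, mk_prod, lift_id, lift_uzero]
  refine add_le_of_le hκ (mul_le_of_le hκ hn (mul_le_of_le hκ hS hS)) (add_le_of_le hκ ?_ ?_)
  · exact mul_le_of_le hκ hn (mul_le_of_le hκ hn (mul_le_of_le hκ hS hS))
  · exact mul_le_of_le hκ hn (mul_le_of_le hκ hS hB)

theorem eventually_constIn_of_constIn_iUnion {ι : Type*} [Preorder ι] [IsDirected ι (· ≤ ·)]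
    {X : ι → Set B} (hX : Monotone X) {e : ActEq S B n} (he : ConstIn (⋃ i, X i) e) :
    ∀ᶠ i in atTop, ConstIn (X i) e := by
  cases e with
  | xra j r a =>
    obtain ⟨i, hi⟩ := Set.mem_iUnion.1 he
    exact (eventually_ge_atTop i).mono fun k hk => hX hk hi
  | _ => exact .of_forall fun _ => trivial

end ActEq

section

variable (S : Type u) {A : Type u} [Monoid S] [MulAction S A]

def SolvableSystem (X : Set A) : Type u :=
  {p : Σ n : ℕ, List (ActEq S X n) // ∃ v : Fin p.1 → A, ∀ e ∈ p.2, SatEq v (e.map (↑))}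

def adjoinSolutions (X : Set A) : Set A :=
  X ∪ ⋃ p : SolvableSystem S X, Set.range p.2.choose

def pureHull (X : Set A) : Set A :=
  ⋃ k, (adjoinSolutions S)^[k] X

variable {S}

theorem IsPure.smul_mem {U : Set A} (hU : IsPure S U) (s : S) {a : A} (ha : a ∈ U) :
    s • a ∈ U := by
  obtain ⟨v, hvU, hv⟩ := hU 2 [.xra 0 1 a, .xrys 1 0 1 s]
    (by simpa [ConstIn] using ha) ⟨![a, s • a], by simp [SatEq]⟩
  simp only [List.mem_cons, List.not_mem_nil, forall_eq_or_imp, SatEq, one_smul] at hv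
  rw [← hv.1, ← hv.2.1]
  exact hvU 1

theorem subset_adjoinSolutions (X : Set A) : X ⊆ adjoinSolutions S X :=
  Set.subset_union_left

theorem exists_solution_in_adjoinSolutions {X : Set A} {n : ℕ} {E : List (ActEq S A n)}
    (hE : ∀ e ∈ E, ConstIn X e) (hsol : ∃ v : Fin n → A, ∀ e ∈ E, SatEq v e) :
    ∃ v : Fin n → A, (∀ i, v i ∈ adjoinSolutions S X) ∧ ∀ e ∈ E, SatEq v e := by
  lift E to List (ActEq S X n) using hE
  simp only [List.forall_mem_map] at hsol ⊢
  let p : SolvableSystem S X := ⟨⟨n, E⟩, hsol⟩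
  exact ⟨p.2.choose, fun i => Or.inr (Set.mem_iUnion.2 ⟨p, i, rfl⟩), p.2.choose_spec⟩

theorem mk_solvableSystem_le {κ : Cardinal.{u}} (hκ : ℵ₀ ≤ κ) (hS : #S ≤ κ) {X : Set A}
    (hX : #X ≤ κ) : #(SolvableSystem S X) ≤ κ := by
  refine (mk_subtype_le _).trans ?_
  rw [mk_sigma]
  refine (sum_le_lift_mk_mul_iSup _).trans (mul_le_of_le hκ (by simpa using hκ) (ciSup_le' ?_))
  exact fun n => (mk_list_le_max _).trans (max_le hκ (ActEq.mk_le_of_le hκ hS hX))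

theorem mk_adjoinSolutions_le {κ : Cardinal.{u}} (hκ : ℵ₀ ≤ κ) (hS : #S ≤ κ) {X : Set A}
    (hX : #X ≤ κ) : #(adjoinSolutions S X) ≤ κ := by
  refine (mk_union_le _ _).trans (add_le_of_le hκ hX ?_)
  refine mk_iUnion_le_of_le hκ (by simpa using mk_solvableSystem_le hκ hS hX) fun p => ?_
  exact (mk_le_aleph0_iff.2 (Set.countable_range _).to_subtype).trans hκ

theorem monotone_iterate_adjoinSolutions (X : Set A) :
    Monotone fun k => (adjoinSolutions S)^[k] X :=
  monotone_nat_of_le_succ fun k => by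
    rw [Function.iterate_succ_apply']
    exact subset_adjoinSolutions _

theorem subset_pureHull (X : Set A) : X ⊆ pureHull S X :=
  Set.subset_iUnion (fun k => (adjoinSolutions S)^[k] X) 0

theorem isPure_pureHull (X : Set A) : IsPure S (pureHull S X) := by
  intro n E hE hsol
  have hlevel : ∀ e ∈ E, ∀ᶠ k in atTop, ConstIn ((adjoinSolutions S)^[k] X) e := fun e he =>
    ActEq.eventually_constIn_of_constIn_iUnion (monotone_iterate_adjoinSolutions X) (hE e he)
  obtain ⟨k, hk⟩ := ((eventually_all_finite E.finite_toSet).2 hlevel).exists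
  obtain ⟨v, hvU, hv⟩ := exists_solution_in_adjoinSolutions hk hsol
  refine ⟨v, fun i => Set.mem_iUnion.2 ⟨k + 1, ?_⟩, hv⟩
  rw [Function.iterate_succ_apply']
  exact hvU i

theorem mk_pureHull_le {κ : Cardinal.{u}} (hκ : ℵ₀ ≤ κ) (hS : #S ≤ κ) {X : Set A}
    (hX : #X ≤ κ) : #(pureHull S X) ≤ κ := by
  refine mk_iUnion_le_of_le hκ (by simpa using hκ) fun k => ?_
  induction k with
  | zero => exact hX
  | succ k ih =>
    rw [Function.iterate_succ_apply']
    exact mk_adjoinSolutions_le hκ hS ih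

end

/-- every subact `T` of `A` embeds in a pure subact `U` of `A`
with `|U| ≤ max {ℵ₀, |S|, |T|}`. -/
theorem exists_pure_subact {S A : Type u} [Monoid S] [MulAction S A]
    (T : SubMulAction S A) :
    ∃ U : SubMulAction S A, IsPure S (U : Set A) ∧ T ≤ U ∧
      #U ≤ max (max ℵ₀ #S) #T := by
  have hpure : IsPure S (pureHull S (T : Set A)) := isPure_pureHull _
  refine ⟨⟨pureHull S T, fun s a ha => hpure.smul_mem s ha⟩, hpure, subset_pureHull _, ?_⟩
  exact mk_pureHull_le (le_max_of_le_left (le_max_left _ _))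
    (le_max_of_le_left (le_max_right _ _)) (le_max_right _ _)
end

section
/- Let 𝒞 be a class of S-acts closed under pure subacts and under arbitrary direct products. Then every S-act has a 𝒞-preenvelope. -/
universe u

open Cardinal

/-!
Every map `f : A → C` with `C ∈ 𝒞` factors through a pure subact of `C` of cardinality at most
`κ = max |A| |S| ℵ₀`, which lies in `𝒞`. Such a subact exists by downward Löwenheim–Skolem
for the language with one unary function symbol per element of `S`: an elementary substructure
is pure, because solvability of a finite system of equations is an existential formula. Up to
isomorphism there is only a set of pairs `(D, A → D)` with `D ∈ 𝒞` and `|D| ≤ κ`, and the product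
of representatives of them is a `𝒞`-preenvelope of `A`.
-/

universe v w

namespace FirstOrder.Language

inductive mulActionFunc (S : Type u) : ℕ → Type u
  | smul (s : S) : mulActionFunc S 1

protected def mulAction (S : Type u) : FirstOrder.Language.{u, 0} :=
  ⟨mulActionFunc S, fun _ => Empty⟩

theorem card_mulAction_le (S : Type u) : (Language.mulAction S).card ≤ #S := by
  refine mk_le_of_injective (f := Sum.elim (fun | ⟨_, .smul s⟩ => s) (fun r => r.2.elim)) ?_
  rintro (⟨_, ⟨s⟩⟩ | ⟨_, ⟨⟩⟩) (⟨_, ⟨t⟩⟩ | ⟨_, ⟨⟩⟩) h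
  cases h; rfl

theorem exists_elementarySubstructure_card_le (L : Language.{u, v}) {M : Type w}
    [L.Structure M] (s : Set M) {κ : Cardinal.{w}} (h1 : ℵ₀ ≤ κ) (h2 : #s ≤ κ)
    (h3 : lift.{w} L.card ≤ lift.{max u v} κ) :
    ∃ U : L.ElementarySubstructure M, s ⊆ U ∧ #U ≤ κ := by
  rcases le_total κ #M with hκM | hMκ
  · obtain ⟨U, hsU, hU⟩ :=
      exists_elementarySubstructure_card_eq L s κ h1 (by simpa) h3 (by simpa)
    exact ⟨U, hsU, (by simpa using hU : #U = κ).le⟩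
  · exact ⟨⊤, fun x _ => ElementarySubstructure.mem_top x, (mk_subtype_le _).trans hMκ⟩

variable {S B : Type u} [Monoid S] [MulAction S B]

def mulActionFunc.interpret : {n : ℕ} → mulActionFunc S n → (Fin n → B) → B
  | _, .smul s, x => s • x 0

instance : (Language.mulAction S).Structure B where
  funMap := mulActionFunc.interpret
  RelMap := fun r => Empty.elim r

def smulTerm {α : Type*} (s : S) (t : (Language.mulAction S).Term α) :
    (Language.mulAction S).Term α :=
  Functions.apply₁ (L := Language.mulAction S) (mulActionFunc.smul s) t

@[simp]
theorem realize_smulTerm {α : Type*} (s : S) (t : (Language.mulAction S).Term α) (v : α → B) :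
    (smulTerm s t).realize v = s • t.realize v :=
  rfl

def Substructure.toSubMulAction (U : (Language.mulAction S).Substructure B) :
    SubMulAction S B where
  carrier := U
  smul_mem' s x hx := U.fun_mem (mulActionFunc.smul s) ![x] (by simpa using hx)

end FirstOrder.Language

open FirstOrder FirstOrder.Language

section PureSubact

variable {S B : Type u} [Monoid S] [MulAction S B]

/-- The free variables are the elements of `U`; an equation `x r = a` with `a ∉ U` becomes `⊥`,
which is harmless since such equations never occur in systems over `U`. -/
noncomputable def ActEq.toBoundedFormula {n : ℕ} (U : Set B) :
    ActEq S B n → (Language.mulAction S).BoundedFormula U n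
  | .xrxs i r s => smulTerm r &i =' smulTerm s &i
  | .xrys i j r s => smulTerm r &i =' smulTerm s &j
  | .xra i r a => by
    classical
    exact if h : a ∈ U then smulTerm r &i =' Term.var (Sum.inl ⟨a, h⟩) else ⊥

theorem ActEq.realize_toBoundedFormula {n : ℕ} {U : Set B} {e : ActEq S B n}
    (he : ConstIn U e) (xs : Fin n → B) :
    (e.toBoundedFormula U).Realize Subtype.val xs ↔ SatEq xs e := by
  cases e with
  | xra i r a =>
    have ha : a ∈ U := he
    simp [toBoundedFormula, ha, SatEq]
  | _ => simp [toBoundedFormula, SatEq]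

theorem FirstOrder.Language.ElementarySubstructure.isPure
    (U : (Language.mulAction S).ElementarySubstructure B) : IsPure S (U : Set B) := by
  intro n E hE ⟨v, hv⟩
  let φ := (E.map (ActEq.toBoundedFormula (U : Set B))).foldr (· ⊓ ·) ⊤
  have hφ : ∀ xs, φ.Realize Subtype.val xs ↔ ∀ e ∈ E, SatEq xs e := fun xs => by
    simp only [φ, BoundedFormula.realize_foldr_inf, List.forall_mem_map]
    exact forall₂_congr fun e he => ActEq.realize_toBoundedFormula (hE e he) xs
  have hB : φ.exs.Realize (M := B) (U.subtype ∘ id) :=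
    BoundedFormula.realize_exs.2 ⟨v, (hφ v).2 hv⟩
  obtain ⟨ys, hys⟩ := BoundedFormula.realize_exs.1 ((U.subtype.map_formula _ _).1 hB)
  exact ⟨U.subtype ∘ ys, fun i => (ys i).2,
    (hφ _).1 ((U.subtype.map_boundedFormula φ id ys).2 hys)⟩

theorem exists_isPure_subMulAction_card_le (X : Set B) {κ : Cardinal.{u}} (hκ : ℵ₀ ≤ κ)
    (hS : #S ≤ κ) (hX : #X ≤ κ) :
    ∃ U : SubMulAction S B, X ⊆ U ∧ IsPure S (U : Set B) ∧ #U ≤ κ := by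
  obtain ⟨U, hXU, hU⟩ := exists_elementarySubstructure_card_le (Language.mulAction S) X hκ hX
    (by simpa using (card_mulAction_le S).trans hS)
  exact ⟨U.toSubstructure.toSubMulAction, hXU, U.isPure, hU⟩

end PureSubact

section Preenvelope

variable {S : Type u} [Monoid S] {𝒞 : (C : Type u) → [MulAction S C] → Prop}
  {A : Type u} [MulAction S A]

theorem hasPreenvelope_of_solutionSet {ι : Type u} (D : ι → Type u) [∀ i, MulAction S (D i)]
    (hD : 𝒞 ((i : ι) → D i)) (ψ : ∀ i, A →[S] D i)
    (hψ : ∀ (C : Type u) [MulAction S C], 𝒞 C →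
      ∀ f : A →[S] C, ∃ i, ∃ g : D i →[S] C, ∀ a, g (ψ i a) = f a) :
    HasPreenvelope 𝒞 A := by
  refine ⟨(i : ι) → D i, inferInstance,
    ⟨fun a i => ψ i a, fun m a => funext fun i => map_smul (ψ i) m a⟩, hD, ?_⟩
  intro C _ hC f
  obtain ⟨i, g, hg⟩ := hψ C hC f
  exact ⟨g.comp (Pi.evalMulActionHom i), hg⟩

theorem exists_equivariant_equiv_set (D K : Type u) [MulAction S D] (hD : #D ≤ #K) :
    ∃ (s : Set K) (_ : MulAction S s) (e : s →[S] D) (e' : D →[S] s),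
      (∀ d, e (e' d) = d) ∧ ∀ x, e' (e x) = x := by
  obtain ⟨emb⟩ := (Cardinal.le_def D K).1 hD
  let q : D ≃ Set.range emb := Equiv.ofInjective emb emb.injective
  let := q.symm.mulAction S
  exact ⟨Set.range emb, inferInstance, ⟨q.symm, fun m x => by simp [Equiv.smul_def]⟩,
    ⟨q, fun m d => by simp [Equiv.smul_def]⟩, q.symm_apply_apply, q.apply_symm_apply⟩

variable (𝒞) in
/-- `𝒞` need not be closed under isomorphism, so an act transported onto a subset of a fixed
type does not inherit membership in `𝒞`; instead we record a member of `𝒞` retracting onto it. -/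
structure RetractData (W : Type u) [MulAction S W] : Type (u + 1) where
  obj : Type u
  [instMulAction : MulAction S obj]
  mem : 𝒞 obj
  incl : W →[S] obj
  retr : obj →[S] W
  retr_incl : ∀ w, retr (incl w) = w

attribute [instance] RetractData.instMulAction

variable (𝒞 A) in
structure SmallCode (K : Type u) where
  carrier : Set K
  [instMulAction : MulAction S carrier]
  hom : A →[S] carrier
  nonempty_retractData : Nonempty (RetractData 𝒞 carrier)

attribute [instance] SmallCode.instMulAction

namespace SmallCode

variable {K : Type u}

noncomputable def retractData (j : SmallCode 𝒞 A K) : RetractData 𝒞 j.carrier :=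
  Classical.choice j.nonempty_retractData

theorem exists_factorization {D : Type u} [MulAction S D] (hD : 𝒞 D) (hDK : #D ≤ #K)
    (h : A →[S] D) :
    ∃ (j : SmallCode 𝒞 A K) (e : j.carrier →[S] D), ∀ a, e (j.hom a) = h a := by
  obtain ⟨s, _, e, e', he, he'⟩ := exists_equivariant_equiv_set (S := S) D K hDK
  exact ⟨⟨s, e'.comp h, ⟨⟨D, hD, e, e', he'⟩⟩⟩, e, fun a => he (h a)⟩

end SmallCode

theorem hasPreenvelope_of_factors_through_small
    (hprod : ∀ (ι : Type u) (C : ι → Type u) [∀ i, MulAction S (C i)],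
      (∀ i, 𝒞 (C i)) → 𝒞 ((i : ι) → C i))
    (K : Type u)
    (hsmall : ∀ (C : Type u) [MulAction S C], 𝒞 C → ∀ f : A →[S] C,
      ∃ (D : Type u) (_ : MulAction S D) (h : A →[S] D) (g : D →[S] C),
        𝒞 D ∧ #D ≤ #K ∧ ∀ a, g (h a) = f a) :
    HasPreenvelope 𝒞 A := by
  refine hasPreenvelope_of_solutionSet (fun j : SmallCode 𝒞 A K => j.retractData.obj)
    (hprod _ _ fun j => j.retractData.mem) (fun j => j.retractData.incl.comp j.hom) ?_
  intro C _ hC f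
  obtain ⟨D, _, h, g, hD, hDK, hgh⟩ := hsmall C hC f
  obtain ⟨j, e, he⟩ := SmallCode.exists_factorization hD hDK h
  refine ⟨j, (g.comp e).comp j.retractData.retr, fun a => ?_⟩
  simp [j.retractData.retr_incl, he, hgh]

end Preenvelope

/-- a class closed under pure subacts and products is preenveloping. -/
theorem preenveloping_of_closed {S : Type u} [Monoid S]
    (𝒞 : (C : Type u) → [MulAction S C] → Prop)
    (hpure : ∀ (C : Type u) [MulAction S C], 𝒞 C →
      ∀ U : SubMulAction S C, IsPure S (U : Set C) → 𝒞 U)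
    (hprod : ∀ (ι : Type u) (C : ι → Type u) [∀ i, MulAction S (C i)],
      (∀ i, 𝒞 (C i)) → 𝒞 ((i : ι) → C i)) :
    ∀ (A : Type u) [MulAction S A], HasPreenvelope 𝒞 A := by
  intro A _
  let κ := max (max #A #S) ℵ₀
  refine hasPreenvelope_of_factors_through_small hprod κ.out fun C _ hC f => ?_
  obtain ⟨U, hfU, hU, hUκ⟩ := exists_isPure_subMulAction_card_le (S := S) (Set.range f)
    (le_max_right _ _) ((le_max_right _ _).trans (le_max_left _ _))
    (mk_range_le.trans ((le_max_left _ _).trans (le_max_left _ _)))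
  let h : A →[S] U := ⟨fun a => ⟨f a, hfU ⟨a, rfl⟩⟩, fun m a => Subtype.ext (map_smul f m a)⟩
  exact ⟨U, inferInstance, h, U.inclusion, hpure C hC U hU, by rwa [mk_out], fun a => rfl⟩
end

section
/- A pure subact of a weakly f-injective S-act is weakly f-injective. -/
/-!
Compose `h : I → U` with the inclusion and extend it in `A`; every act map `S → A` is
`s ↦ s • a` for `a` the image of `1`. Then `a` solves the finite system `f • x = h f` (`f ∈ F`),
whose constants lie in `U`, so purity yields a solution `u ∈ U`, and `s ↦ s • u` extends `h`.
-/

universe u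

open Cardinal

section Extension

variable {S A : Type u} [Monoid S] [MulAction S A]

theorem mem_genIdeal_of_mem {F : Set S} {f : S} (hf : f ∈ F) : f ∈ genIdeal F :=
  ⟨1, f, hf, (one_mul f).symm⟩

theorem extendsHom_iff_exists_smul_eq {I : Set S} (h : I → A) :
    ExtendsHom I h ↔ ∃ a : A, ∀ x : I, (x : S) • a = h x := by
  constructor
  · rintro ⟨g, hg, hgh⟩
    refine ⟨g 1, fun x => ?_⟩
    rw [← hg, mul_one, hgh]
  · rintro ⟨a, ha⟩
    exact ⟨(· • a), fun s t => mul_smul s t a, ha⟩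

theorem smul_eq_of_forall_mem_generators {F : Set S} {h : genIdeal F → A}
    (hh : ∀ (s : S) (x : genIdeal F), h ⟨s * ↑x, genIdeal_smul _ s x.2⟩ = s • h x) {a : A}
    (ha : ∀ f (hf : f ∈ F), f • a = h ⟨f, mem_genIdeal_of_mem hf⟩) (x : genIdeal F) :
    (x : S) • a = h x := by
  obtain ⟨_, s, f, hf, rfl⟩ := x
  calc (s * f) • a = s • h ⟨f, mem_genIdeal_of_mem hf⟩ := by rw [mul_smul, ha f hf]
    _ = h ⟨s * f, _⟩ := (hh s ⟨f, mem_genIdeal_of_mem hf⟩).symm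

end Extension

theorem IsPure.exists_mem_smul_eq {S B : Type u} [Monoid S] [MulAction S B] {U : Set B}
    (hU : IsPure S U) {ι : Type*} [Fintype ι] (r : ι → S) (c : ι → B) (hc : ∀ i, c i ∈ U)
    (hsolv : ∃ b : B, ∀ i, r i • b = c i) : ∃ u ∈ U, ∀ i, r i • u = c i := by
  let E : List (ActEq S B 1) := Finset.univ.toList.map fun i => .xra 0 (r i) (c i)
  have mem_E {e : ActEq S B 1} : e ∈ E ↔ ∃ i, e = .xra 0 (r i) (c i) := by
    simp [E, eq_comm]
  obtain ⟨b, hb⟩ := hsolv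
  obtain ⟨v, hvU, hv⟩ := hU 1 E
    (fun e he => by obtain ⟨i, rfl⟩ := mem_E.1 he; exact hc i)
    ⟨fun _ => b, fun e he => by obtain ⟨i, rfl⟩ := mem_E.1 he; exact hb i⟩
  exact ⟨v 0, hvU 0, fun i => hv _ (mem_E.2 ⟨i, rfl⟩)⟩

/-- a pure subact of a weakly f-injective act is weakly f-injective. -/
theorem pure_subact_weaklyFInjective {S A : Type u} [Monoid S] [MulAction S A]
    (hA : IsWeaklyFInjective S A) (U : SubMulAction S A)
    (hU : IsPure S (U : Set A)) : IsWeaklyFInjective S U := by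
  intro F h hh
  obtain ⟨a, ha⟩ := (extendsHom_iff_exists_smul_eq _).1 <|
    hA F (fun x => (h x : A)) fun s x => congrArg Subtype.val (hh s x)
  obtain ⟨u, hu, hFu⟩ := hU.exists_mem_smul_eq (ι := F) Subtype.val
    (fun f => (h ⟨f, mem_genIdeal_of_mem f.2⟩ : A)) (fun f => (h _).2) ⟨a, fun f => ha ⟨f, _⟩⟩
  refine (extendsHom_iff_exists_smul_eq h).2 ⟨⟨u, hu⟩, smul_eq_of_forall_mem_generators hh ?_⟩
  exact fun f hf => Subtype.ext (hFu ⟨f, hf⟩)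
end

section
/- A pure subact of a weakly p-injective S-act is weakly p-injective. -/
universe u

open Cardinal

/-!
A homomorphism `h` from the principal right ideal `tS` extends to `S` exactly when the
single equation `t • x = h t` is solvable, the extension being `s ↦ s • x`. Extending
`h` into `A` solves this equation in `A`; its constant `h t` lies in `U`, so purity
solves it in `U`.
-/

theorem self_mem_genIdeal_singleton {S : Type u} [Monoid S] (t : S) :
    t ∈ genIdeal ({t} : Set S) :=
  ⟨1, t, rfl, (one_mul t).symm⟩

section ExtendsHom

variable {S A : Type u} [Monoid S] [MulAction S A] {t : S} {h : genIdeal ({t} : Set S) → A}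

theorem ExtendsHom.exists_smul_eq (hext : ExtendsHom (genIdeal {t}) h) :
    ∃ a : A, t • a = h ⟨t, self_mem_genIdeal_singleton t⟩ := by
  obtain ⟨g, hg_smul, hg_eq⟩ := hext
  refine ⟨g 1, ?_⟩
  rw [← hg_smul, mul_one]
  exact hg_eq ⟨t, self_mem_genIdeal_singleton t⟩

theorem extendsHom_of_smul_eq
    (hh : ∀ (s : S) (x : genIdeal {t}), h ⟨s * ↑x, genIdeal_smul _ s x.2⟩ = s • h x)
    {a : A} (ha : t • a = h ⟨t, self_mem_genIdeal_singleton t⟩) :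
    ExtendsHom (genIdeal {t}) h := by
  refine ⟨fun s => s • a, fun s s' => mul_smul s s' a, ?_⟩
  rintro ⟨_, s, _, rfl, rfl⟩
  show (s * _) • a = _
  rw [mul_smul, ha, hh s ⟨_, self_mem_genIdeal_singleton _⟩]

end ExtendsHom

theorem IsPure.exists_smul_eq {S B : Type u} [Monoid S] [MulAction S B] {U : Set B}
    (hU : IsPure S U) {t : S} {b c : B} (hc : c ∈ U) (hb : t • b = c) :
    ∃ u ∈ U, t • u = c := by
  obtain ⟨v, hvU, hv⟩ := hU 1 [.xra 0 t c]
    (by simpa [ConstIn] using hc) ⟨fun _ => b, by simpa [SatEq] using hb⟩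
  exact ⟨v 0, hvU 0, by simpa [SatEq] using hv⟩

/-- a pure subact of a weakly p-injective act is weakly p-injective. -/
theorem pure_subact_weaklyPInjective {S A : Type u} [Monoid S] [MulAction S A]
    (hA : IsWeaklyPInjective S A) (U : SubMulAction S A)
    (hU : IsPure S (U : Set A)) : IsWeaklyPInjective S U := by
  intro t h hh
  have hhA : ∀ (s : S) (x : genIdeal {t}),
      (h ⟨s * ↑x, genIdeal_smul _ s x.2⟩ : A) = s • (h x : A) := fun s x =>
    congrArg Subtype.val (hh s x)
  obtain ⟨a, ha⟩ := (hA t (fun x => (h x : A)) hhA).exists_smul_eq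
  obtain ⟨u, huU, hu⟩ := hU.exists_smul_eq (h _).2 ha
  exact extendsHom_of_smul_eq hh (a := ⟨u, huU⟩) (Subtype.ext hu)
end

section
/- Every S-act has a preenvelope with respect to the class of weakly p-injective S-acts, and every such preenvelope is a monomorphism. -/
universe u

open Cardinal

/-!
Let `f : A → C` be a map into a weakly p-injective act. The elements of `C` reachable from
`f(A)` by acting with `S` and by taking chosen roots (solutions of `t • x = b`, whenever one
exists in `C`) form a weakly p-injective act, a quotient of the term algebra `RootTerm S A`.
These quotients form a set depending only on `S` and `A`, so the product of all weakly
p-injective act structures on quotients of `RootTerm S A` receiving `A` is weakly p-injective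
and every map from `A` to a weakly p-injective act factors through one of its projections.
Every preenvelope is injective because `A` embeds into the cofree act `S → Option A`, which is
weakly p-injective.
-/

section

variable {S : Type u} [Monoid S]

theorem mem_genIdeal_singleton (t : S) : t ∈ genIdeal ({t} : Set S) :=
  ⟨1, t, rfl, (one_mul t).symm⟩

section WeaklyPInjective

variable {C D : Type u} [MulAction S C] [MulAction S D]

theorem extendsHom_genIdeal_singleton_iff {t : S} {h : genIdeal ({t} : Set S) → C}
    (hh : ∀ (s : S) (x : genIdeal ({t} : Set S)),
      h ⟨s * ↑x, genIdeal_smul _ s x.2⟩ = s • h x) :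
    ExtendsHom (genIdeal {t}) h ↔ ∃ c : C, t • c = h ⟨t, mem_genIdeal_singleton t⟩ := by
  constructor
  · rintro ⟨g, hg, hgh⟩
    refine ⟨g 1, ?_⟩
    rw [← hg, mul_one]
    exact hgh ⟨t, mem_genIdeal_singleton t⟩
  · rintro ⟨c, hc⟩
    refine ⟨fun s => s • c, fun s r => mul_smul s r c, ?_⟩
    rintro ⟨_, s, f, hf, rfl⟩
    obtain rfl : f = t := hf
    show (s * f) • c = _
    rw [mul_smul, hc, ← hh]

theorem isWeaklyPInjective_iff :
    IsWeaklyPInjective S C ↔ ∀ (t : S) (h : genIdeal ({t} : Set S) → C),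
      (∀ (s : S) (x : genIdeal ({t} : Set S)),
        h ⟨s * ↑x, genIdeal_smul _ s x.2⟩ = s • h x) →
      ∃ c : C, t • c = h ⟨t, mem_genIdeal_singleton t⟩ :=
  forall₂_congr fun _ _ => imp_congr_right fun hh => extendsHom_genIdeal_singleton_iff hh

theorem IsWeaklyPInjective.of_hom (ι : D →[S] C) (hC : IsWeaklyPInjective S C)
    (hroot : ∀ (t : S) (d : D), (∃ c : C, t • c = ι d) → ∃ d' : D, t • d' = d) :
    IsWeaklyPInjective S D := by
  rw [isWeaklyPInjective_iff] at hC ⊢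
  intro t h hh
  exact hroot t _ (hC t (ι ∘ h) fun s x => by simp only [Function.comp_apply, hh, map_smul])

theorem IsWeaklyPInjective.pi {ι : Type u} {P : ι → Type u} [∀ i, MulAction S (P i)]
    (hP : ∀ i, IsWeaklyPInjective S (P i)) : IsWeaklyPInjective S (∀ i, P i) := by
  rw [isWeaklyPInjective_iff]
  intro t h hh
  choose c hc using fun i => (isWeaklyPInjective_iff.mp (hP i)) t (fun x => h x i)
    fun s x => congrFun (hh s x) i
  exact ⟨c, funext hc⟩

end WeaklyPInjective

def Cofree (S X : Type u) : Type u := S → X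

instance (X : Type u) : MulAction S (Cofree S X) where
  smul s f t := f (t * s)
  one_smul f := funext fun t => congrArg f (mul_one t)
  mul_smul r s f := funext fun t => congrArg f (mul_assoc t r s).symm

open Classical in
theorem isWeaklyPInjective_cofree (X : Type u) [Nonempty X] :
    IsWeaklyPInjective S (Cofree S X) := by
  rw [isWeaklyPInjective_iff]
  intro t h hh
  let c : Cofree S X := fun w =>
    if hw : w ∈ genIdeal {t} then h ⟨w, hw⟩ 1 else Classical.arbitrary X
  refine ⟨c, funext fun u => ?_⟩
  show c (u * t) = _
  simp only [c, dif_pos (genIdeal_smul _ u (mem_genIdeal_singleton t))]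
  exact (congrArg (· 1) (hh u ⟨t, mem_genIdeal_singleton t⟩)).trans
    (congrArg (h _) (one_mul u))

def Cofree.embed (A : Type u) [MulAction S A] : A →[S] Cofree S (Option A) where
  toFun a u := some (u • a)
  map_smul' s a := funext fun u => congrArg some (mul_smul u s a).symm

theorem Cofree.embed_injective (A : Type u) [MulAction S A] :
    Function.Injective (Cofree.embed (S := S) A) := fun a a' h => by
  have h1 : some ((1 : S) • a) = some ((1 : S) • a') := congrFun h 1
  simpa only [one_smul, Option.some_inj] using h1

inductive RootTerm (S A : Type u) : Type u
  | of : A → RootTerm S A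
  | smul : S → RootTerm S A → RootTerm S A
  | root : S → RootTerm S A → RootTerm S A

namespace RootTerm

variable {A C : Type u} [MulAction S C] (f : A → C)

open Classical in
noncomputable def eval : RootTerm S A → C
  | of a => f a
  | smul s τ => s • eval τ
  | root t τ => if h : ∃ c : C, t • c = eval τ then h.choose else eval τ

theorem smul_eval_root {t : S} {τ : RootTerm S A} (h : ∃ c : C, t • c = eval f τ) :
    t • eval f (root t τ) = eval f τ := by
  rw [eval, dif_pos h]
  exact h.choose_spec

end RootTerm

def RootHull {A C : Type u} [MulAction S C] (f : A → C) : Type u :=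
  Quotient (Setoid.ker (RootTerm.eval (S := S) f))

namespace RootHull

variable {A C : Type u} [MulAction S C] {f : A → C}

noncomputable instance : MulAction S (RootHull (S := S) f) where
  smul s := Quotient.map' (RootTerm.smul s) fun _ _ h => congrArg (s • ·) h
  one_smul := Quotient.ind fun τ => Quotient.sound (one_smul S (RootTerm.eval f τ))
  mul_smul r s := Quotient.ind fun τ => Quotient.sound (mul_smul r s (RootTerm.eval f τ))

noncomputable def lift (f : A → C) : RootHull (S := S) f →[S] C where
  toFun := Quotient.lift (RootTerm.eval f) fun _ _ h => h
  map_smul' _ := Quotient.ind fun _ => rfl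

theorem isWeaklyPInjective (hC : IsWeaklyPInjective S C) :
    IsWeaklyPInjective S (RootHull (S := S) f) := by
  refine hC.of_hom (lift f) fun t => Quotient.ind fun τ hτ => ⟨⟦.root t τ⟧, ?_⟩
  exact Quotient.sound (RootTerm.smul_eval_root f hτ)

variable [MulAction S A]

noncomputable def of (f : A →[S] C) : A →[S] RootHull (S := S) f where
  toFun a := ⟦.of a⟧
  map_smul' s a := Quotient.sound (f.map_smul s a)

theorem lift_of (f : A →[S] C) (a : A) : lift f (of f a) = f a := rfl

end RootHull

section Envelope

variable (S) (A : Type u) [MulAction S A]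

structure RootQuotient : Type u where
  rel : Setoid (RootTerm S A)
  [act : MulAction S (Quotient rel)]
  isWeaklyPInjective : IsWeaklyPInjective S (Quotient rel)
  of : A →[S] Quotient rel

attribute [instance] RootQuotient.act

def WeaklyPInjectivePreenvelope : Type u := ∀ i : RootQuotient S A, Quotient i.rel

namespace WeaklyPInjectivePreenvelope

noncomputable instance : MulAction S (WeaklyPInjectivePreenvelope S A) := Pi.mulAction _

variable {S A}

def of : A →[S] WeaklyPInjectivePreenvelope S A where
  toFun a i := i.of a
  map_smul' s a := funext fun i => i.of.map_smul s a

theorem exists_lift {C : Type u} [MulAction S C] (hC : IsWeaklyPInjective S C)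
    (f : A →[S] C) : ∃ g : WeaklyPInjectivePreenvelope S A →[S] C, ∀ a, g (of a) = f a := by
  let i : RootQuotient S A :=
    { rel := Setoid.ker (RootTerm.eval f)
      act := inferInstanceAs (MulAction S (RootHull (S := S) f))
      isWeaklyPInjective := RootHull.isWeaklyPInjective hC
      of := RootHull.of f }
  exact ⟨⟨fun v => RootHull.lift f (v i), fun s v => (RootHull.lift f).map_smul s (v i)⟩,
    RootHull.lift_of f⟩

theorem isPreenvelope :
    IsPreenvelope (fun C [MulAction S C] => IsWeaklyPInjective S C) A
      (WeaklyPInjectivePreenvelope S A) of :=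
  ⟨IsWeaklyPInjective.pi fun i => i.isWeaklyPInjective, fun _ _ hC f => exists_lift hC f⟩

end WeaklyPInjectivePreenvelope

end Envelope

theorem IsPreenvelope.injective {𝒞 : (C : Type u) → [MulAction S C] → Prop}
    {A C D : Type u} [MulAction S A] [MulAction S C] [MulAction S D] {φ : A →[S] C}
    (hφ : IsPreenvelope 𝒞 A C φ) (hD : 𝒞 D) (ι : A →[S] D)
    (hι : Function.Injective ι) :
    Function.Injective φ := by
  obtain ⟨g, hg⟩ := hφ.2 D hD ι
  intro a a' h
  exact hι (by rw [← hg, ← hg, h])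

end

/-- every act has a preenvelope with respect to the class of weakly
p-injective acts, and every such preenvelope is a monomorphism. -/
theorem weaklyPInjective_preenveloping {S : Type u} [Monoid S]
    (A : Type u) [MulAction S A] :
    HasPreenvelope (fun C [MulAction S C] => IsWeaklyPInjective S C) A ∧
    ∀ (C : Type u) [MulAction S C] (φ : A →[S] C),
      IsPreenvelope (fun C [MulAction S C] => IsWeaklyPInjective S C) A C φ →
      Function.Injective φ :=
  ⟨⟨WeaklyPInjectivePreenvelope S A, inferInstance, WeaklyPInjectivePreenvelope.of,
      WeaklyPInjectivePreenvelope.isPreenvelope⟩,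
    fun _ _ _ hφ => hφ.injective (isWeaklyPInjective_cofree (Option A)) (Cofree.embed A)
      (Cofree.embed_injective A)⟩
end

section
/- Let 𝒞 be a class of S-acts and A an S-act. Suppose there is a set 𝔅 of S-acts in 𝒞 such that every homomorphism f : A → C with C ∈ 𝒞 factors as A → B → C for some B ∈ 𝔅, and suppose 𝒞 is closed under direct products indexed by any set. Then the canonical map from A into the product, over all pairs (B, g) with B ∈ 𝔅 and g : A → B a homomorphism, of the acts B, is a 𝒞-preenvelope of A. -/
universe u

open Cardinal

/-- the canonical map into the product over all pairs `(B, g)` with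
`B ∈ 𝔅` and `g : A → B` is a `𝒞`-preenvelope. -/
theorem canonical_map_preenvelope {S : Type u} [Monoid S]
    (𝒞 : (C : Type u) → [MulAction S C] → Prop)
    (A : Type u) [MulAction S A]
    (ι : Type u) (Bf : ι → Type u) [∀ i, MulAction S (Bf i)]
    (hB : ∀ i, 𝒞 (Bf i))
    (hfac : ∀ (C : Type u) [MulAction S C], 𝒞 C → ∀ f : A →[S] C,
      ∃ (i : ι) (g : A →[S] Bf i) (h : Bf i →[S] C), ∀ a, h (g a) = f a)
    (hprod : ∀ (κ : Type u) (C : κ → Type u) [∀ k, MulAction S (C k)],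
      (∀ k, 𝒞 (C k)) → 𝒞 ((k : κ) → C k)) :
    IsPreenvelope 𝒞 A ((p : (i : ι) × (A →[S] Bf i)) → Bf p.1)
      ⟨fun a p => p.2 a, by intro s a; funext p; exact map_smul p.2 s a⟩ := by
  refine ⟨hprod _ _ fun p => hB p.1, fun C' _ hC' f => ?_⟩
  obtain ⟨i, g, h, hfg⟩ := hfac C' hC' f
  -- `f` factors through the coordinate indexed by its own factorization `⟨i, g⟩`.
  exact ⟨h.comp (Pi.evalMulActionHom (⟨i, g⟩ : (i : ι) × (A →[S] Bf i))), hfg⟩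
end
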